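/- arXiv:2107.09295 — 3 statements merged into one kernel-verified Lean document; each statement's English description precedes it below -/
import Mathlib

section
/- Let X be a CAT(0) space. If for every closed ball B_r(x) in X the subspace topology induced by the coconvex topology T_co on B_r(x) is Hausdorff, then the topologies T_co and T_Δ coincide on all bounded subsets of X (for every bounded subset the two subspace topologies agree). -/
open Filter Topology Metric Set

/-- `m` is a midpoint of `x` and `y`. -/
def IsMidpoint {X : Type*} [MetricSpace X] (x y m : X) : Prop :=
  dist x m = dist x y / 2 ∧ dist y m = dist x y / 2

/-- A CAT(0) space: a complete metric space with midpoints satisfying the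
CN-inequality of Bruhat–Tits. -/
def IsCAT0 (X : Type*) [MetricSpace X] : Prop :=
  CompleteSpace X ∧
    (∀ x y : X, ∃ m : X, IsMidpoint x y m) ∧
    (∀ x y z m : X, IsMidpoint x y m →
      dist z m ^ 2 ≤ dist z x ^ 2 / 2 + dist z y ^ 2 / 2 - dist x y ^ 2 / 4)

/-- `G` is a (compact) geodesic segment starting at `x`: the image of an
isometric embedding of a compact interval `[0, L]` whose left endpoint is
mapped to `x`. -/
def IsGeodesicSegmentFrom {X : Type*} [MetricSpace X] (x : X) (G : Set X) : Prop :=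
  ∃ (L : ℝ) (γ : ℝ → X), 0 ≤ L ∧ γ 0 = x ∧
    (∀ s ∈ Icc (0:ℝ) L, ∀ t ∈ Icc (0:ℝ) L, dist (γ s) (γ t) = |s - t|) ∧
    G = γ '' Icc (0:ℝ) L

/-- `G` is a geodesic segment from `x` to `y`. -/
def IsGeodesicSegmentBetween {X : Type*} [MetricSpace X] (x y : X) (G : Set X) : Prop :=
  ∃ γ : ℝ → X, γ 0 = x ∧ γ (dist x y) = y ∧
    (∀ s ∈ Icc (0:ℝ) (dist x y), ∀ t ∈ Icc (0:ℝ) (dist x y),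
      dist (γ s) (γ t) = |s - t|) ∧
    G = γ '' Icc (0:ℝ) (dist x y)

/-- `p` is a nearest point of `C` to `z` (a closest-point projection of `z`
onto `C`). -/
def IsNearestPoint {X : Type*} [MetricSpace X] (z : X) (C : Set X) (p : X) : Prop :=
  p ∈ C ∧ ∀ q ∈ C, dist z p ≤ dist z q

/-- Weak (Δ-)convergence of a net `u` (indexed by a preordered set) to `x`:
for every geodesic segment `G` starting at `x`, the closest-point projections
of the `u i` onto `G` converge to `x` in the metric. -/
def WeakConv {X : Type*} [MetricSpace X] {I : Type*} [Preorder I]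
    (u : I → X) (x : X) : Prop :=
  ∀ G : Set X, IsGeodesicSegmentFrom x G →
    ∀ p : I → X, (∀ i, IsNearestPoint (u i) G (p i)) → Tendsto p atTop (𝓝 x)

/-- The sets that are closed in the weak topology `T_Δ`: sets containing all
weak limits of bounded sequences of their elements. -/
def TdeltaClosed {X : Type*} [MetricSpace X] (A : Set X) : Prop :=
  ∀ u : ℕ → X, (∀ n, u n ∈ A) → Bornology.IsBounded (Set.range u) →
    ∀ x : X, WeakConv u x → x ∈ A

/-- `T` is the weak topology `T_Δ`: its closed sets are exactly the weakly
sequentially closed sets. -/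
def IsWeakTopology {X : Type*} [MetricSpace X] (T : TopologicalSpace X) : Prop :=
  ∀ A : Set X, @IsClosed X T A ↔ TdeltaClosed A

/-- Geodesic convexity of a subset of a metric space. -/
def GeodesicallyConvex {X : Type*} [MetricSpace X] (C : Set X) : Prop :=
  ∀ x ∈ C, ∀ y ∈ C, ∀ G : Set X, IsGeodesicSegmentBetween x y G → G ⊆ C

/-- The coconvex topology `T_co`: the coarsest topology on `X` in which every
metrically closed, (geodesically) convex set is closed. -/
def coconvexTopology (X : Type*) [MetricSpace X] : TopologicalSpace X :=
  TopologicalSpace.generateFrom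
    {U : Set X | ∃ C : Set X, IsClosed C ∧ GeodesicallyConvex C ∧ U = Cᶜ}

/-!
The weak topology is finer than the coconvex one because closed convex sets are weakly
sequentially closed: if `u n ∈ C` converges weakly to `x` and `p` is the projection of `x` to
`C`, then every `u n` projects to `p` on the segment `[x, p]`, so `p = x`.

Conversely, let `A ⊆ closedBall x₀ r` be weakly closed and let the ultrafilter `U ∋ A` converge
to `x` in the coconvex topology. The limit distance `ρ z = lim_U dist z ·` inherits the CN
inequality, so it has a minimiser `y`, and projecting `y` to a closed convex set `C ∈ U` shows
`y ∈ C`. Hence `U` also converges to `y`, and `x = y` because the coconvex topology is Hausdorff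
on the ball. A diagonal argument yields `a n ∈ A` with `dist z (a n) → ρ z` for all `z` in the
closed convex hull `Q` of `x` and the `a n`. If `q` is a cluster point of the projections of the
`a n` to a geodesic from `x` and `q'` is the projection of `q` to `Q`, the two obtuse angles give
`ρ q' ^ 2 + dist q x ^ 2 ≤ ρ x ^ 2`, so `q = x` by minimality of `ρ x`. Thus `a` converges weakly
to `x`, and `x ∈ A`.
-/

theorem exists_seq_mem_of_prefix {α : Type*} {P : List α → Set α} (hP : ∀ l, (P l).Nonempty) :
    ∃ a : ℕ → α, ∀ n, a n ∈ P ((List.range n).map a) := by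
  choose pick hpick using hP
  let L : ℕ → List α := fun n => Nat.rec [] (fun _ l => l ++ [pick l]) n
  have hL : ∀ n, L n = (List.range n).map (fun i => pick (L i)) := by
    intro n
    induction n with
    | zero => rfl
    | succ n ih => rw [List.range_succ, List.map_append, ← ih]; rfl
  exact ⟨fun n => pick (L n), fun n => hL n ▸ hpick (L n)⟩

theorem monotone_setOf_mem_map_range {α : Type*} (a : ℕ → α) :
    Monotone fun k => {z | z ∈ (List.range k).map a} := fun i j hij z hz => by
  simp only [mem_ofPred_eq, List.mem_map, List.mem_range] at hz ⊢
  obtain ⟨m, hm, rfl⟩ := hz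
  exact ⟨m, by omega, rfl⟩

theorem iUnion_setOf_mem_map_range {α : Type*} (a : ℕ → α) :
    ⋃ k, {z | z ∈ (List.range k).map a} = range a := by
  ext z
  simp only [mem_iUnion, mem_ofPred_eq, List.mem_map, List.mem_range, mem_range]
  exact ⟨fun ⟨_, m, _, hm⟩ => ⟨m, hm⟩, fun ⟨m, hm⟩ => ⟨m + 1, m, by omega, hm⟩⟩

theorem floor_mul_two_pow_div_le {t D : ℝ} (ht : t ∈ Icc 0 D) (n : ℕ) :
    ⌊t * 2 ^ n / D⌋₊ ≤ 2 ^ n := by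
  have hD : 0 ≤ D := ht.1.trans ht.2
  have : t * 2 ^ n / D ≤ ((2 ^ n : ℕ) : ℝ) := by
    push_cast
    exact div_le_of_le_mul₀ hD (by positivity)
      (by nlinarith [ht.2, pow_pos (by norm_num : (0 : ℝ) < 2) n])
  exact (Nat.floor_le_floor this).trans_eq (Nat.floor_natCast _)

theorem abs_floor_mul_two_pow_div_sub_le {t D : ℝ} (ht : t ∈ Icc 0 D) (n : ℕ) :
    |(⌊t * 2 ^ n / D⌋₊ : ℝ) / 2 ^ n * D - t| ≤ D / 2 ^ n := by
  rcases (ht.1.trans ht.2).eq_or_lt with hD | hD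
  · obtain rfl : t = 0 := le_antisymm (hD ▸ ht.2) ht.1
    simp [← hD]
  have h1 := Nat.floor_le (by have := ht.1; positivity : 0 ≤ t * 2 ^ n / D)
  have h2 := Nat.lt_floor_add_one (t * 2 ^ n / D)
  set k := ⌊t * 2 ^ n / D⌋₊
  rw [le_div_iff₀ hD] at h1
  rw [div_lt_iff₀ hD] at h2
  have hpow : (0 : ℝ) < 2 ^ n := by positivity
  have hle : (k : ℝ) / 2 ^ n * D ≤ t := by
    rw [div_mul_eq_mul_div, div_le_iff₀ hpow]; linarith
  have hlt : t < k / 2 ^ n * D + D / 2 ^ n := by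
    rw [div_mul_eq_mul_div, ← add_div, lt_div_iff₀ hpow]; linarith
  rw [abs_le]
  constructor <;> linarith

theorem eq_of_le_nhds_of_t2Space_subtype {X : Type*} [TopologicalSpace X] {s : Set X}
    [T2Space s] {F : Filter X} [F.NeBot] (hs : s ∈ F) {x y : X} (hx : x ∈ s) (hy : y ∈ s)
    (hFx : F ≤ 𝓝 x) (hFy : F ≤ 𝓝 y) : x = y := by
  have : (comap ((↑) : s → X) F).NeBot := NeBot.comap_of_range_mem ‹_› (by simpa using hs)
  have hx' : comap (↑) F ≤ 𝓝 (⟨x, hx⟩ : s) := by rw [nhds_subtype]; exact comap_mono hFx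
  have hy' : comap (↑) F ≤ 𝓝 (⟨y, hy⟩ : s) := by rw [nhds_subtype]; exact comap_mono hFy
  exact congrArg Subtype.val (tendsto_nhds_unique (tendsto_id'.2 hx') (tendsto_id'.2 hy'))

theorem induced_le_induced_of_mem_of_mem_closure {X : Type*} {t₁ t₂ : TopologicalSpace X}
    {B : Set X} (h : ∀ A, IsClosed[t₂] A → ∀ b ∈ B, b ∈ closure[t₁] (A ∩ B) → b ∈ A) :
    t₁.induced ((↑) : B → X) ≤ t₂.induced (↑) := by
  rw [← continuous_iff_le_induced]
  refine (@continuous_iff_isClosed _ _ (t₁.induced _) t₂ _).2 fun A hA =>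
    (@isClosed_induced_iff _ _ t₁ _ _).2 ⟨closure[t₁] (A ∩ B), @isClosed_closure _ t₁ _, ?_⟩
  ext b
  exact ⟨h A hA b b.2, fun hbA => (@subset_closure _ t₁ _) ⟨hbA, b.2⟩⟩

section MetricSpace

variable {X : Type*} [MetricSpace X]

theorem IsMidpoint.symm {x y m : X} (h : IsMidpoint x y m) : IsMidpoint y x m := by
  unfold IsMidpoint at *
  rwa [dist_comm y x, and_comm]

theorem dist_eq_of_dist_succ_le {p : ℕ → X} {N : ℕ} {c : ℝ}
    (hstep : ∀ i < N, dist (p i) (p (i + 1)) ≤ c) (hend : N * c ≤ dist (p 0) (p N))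
    {i j : ℕ} (hij : i ≤ j) (hjN : j ≤ N) : dist (p i) (p j) = (j - i) * c := by
  have upper : ∀ {i j}, i ≤ j → j ≤ N → dist (p i) (p j) ≤ (j - i) * c := by
    intro i j hij hjN
    calc dist (p i) (p j) ≤ ∑ k ∈ Finset.Ico i j, dist (p k) (p (k + 1)) :=
          dist_le_Ico_sum_dist p hij
      _ ≤ (Finset.Ico i j).card • c :=
          Finset.sum_le_card_nsmul _ _ _ fun k hk => hstep k (by simp at hk; omega)
      _ = (j - i) * c := by simp [Nat.cast_sub hij]
  refine le_antisymm (upper hij hjN) ?_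
  have h0i := upper (Nat.zero_le i) (hij.trans hjN)
  have hjN' := upper hjN le_rfl
  have := dist_triangle4 (p 0) (p i) (p j) (p N)
  push_cast at h0i
  linarith

def MidpointConvex (S : Set X) : Prop :=
  ∀ a ∈ S, ∀ b ∈ S, ∃ m, IsMidpoint a b m ∧ m ∈ S

theorem exists_isMinOn_of_midpointConvex [CompleteSpace X] {S : Set X} (hne : S.Nonempty)
    (hcl : IsClosed S) (hS : MidpointConvex S) {g : X → ℝ} (hg : ContinuousOn g S)
    (hbdd : BddBelow (g '' S))
    (hconv : ∀ a ∈ S, ∀ b ∈ S, ∀ m ∈ S, IsMidpoint a b m →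
      g m ≤ g a / 2 + g b / 2 - dist a b ^ 2 / 4) :
    ∃ p ∈ S, IsMinOn g S p := by
  obtain ⟨v, -, hv, hvS⟩ := exists_seq_tendsto_sInf (hne.image g) hbdd
  choose u huS hgu using hvS
  set ι := sInf (g '' S)
  have hι : ∀ q ∈ S, ι ≤ g q := fun q hq => csInf_le hbdd (mem_image_of_mem g hq)
  have hgu_lim : Tendsto (fun n => g (u n)) atTop (𝓝 ι) := by simpa [hgu] using hv
  have hclose : ∀ n m, dist (u n) (u m) ^ 2 ≤ 2 * (g (u n) - ι) + 2 * (g (u m) - ι) := by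
    intro n m
    obtain ⟨w, hw, hwS⟩ := hS _ (huS n) _ (huS m)
    linarith [hconv _ (huS n) _ (huS m) w hwS hw, hι w hwS]
  have hcauchy : CauchySeq u := by
    refine Metric.cauchySeq_iff'.2 fun ε hε => ?_
    obtain ⟨N, hN⟩ := eventually_atTop.1
      (hgu_lim.eventually (gt_mem_nhds (lt_add_of_pos_right ι (by positivity : 0 < ε ^ 2 / 4))))
    refine ⟨N, fun n hn => lt_of_pow_lt_pow_left₀ 2 hε.le ?_⟩
    linarith [hclose n N, hN n hn, hN N le_rfl]
  obtain ⟨p, hp⟩ := cauchySeq_tendsto_of_complete hcauchy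
  have hpS : p ∈ S := hcl.mem_of_tendsto hp (Eventually.of_forall huS)
  have hgp : g p = ι :=
    tendsto_nhds_unique ((hg p hpS).tendsto.comp (tendsto_nhdsWithin_iff.2
      ⟨hp, Eventually.of_forall huS⟩)) hgu_lim
  exact ⟨p, hpS, fun q hq => hgp ▸ hι q hq⟩

theorem IsNearestPoint.of_dist_add_dist_eq {x q p : X} {C : Set X}
    (hp : IsNearestPoint x C p) (hq : dist x q + dist q p = dist x p) : IsNearestPoint q C p :=
  ⟨hp.1, fun c hc => by linarith [hp.2 c hc, dist_triangle x q c]⟩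

theorem IsGeodesicSegmentFrom.mem {x : X} {G : Set X} (hG : IsGeodesicSegmentFrom x G) :
    x ∈ G := by
  obtain ⟨L, γ, hL, hγ0, -, rfl⟩ := hG
  exact ⟨0, ⟨le_rfl, hL⟩, hγ0⟩

theorem IsGeodesicSegmentFrom.isCompact {x : X} {G : Set X} (hG : IsGeodesicSegmentFrom x G) :
    IsCompact G := by
  obtain ⟨L, γ, -, -, hiso, rfl⟩ := hG
  refine isCompact_Icc.image_of_continuousOn (LipschitzOnWith.continuousOn (K := 1) ?_)
  exact LipschitzOnWith.of_dist_le_mul fun s hs t ht => by simp [hiso s hs t ht, Real.dist_eq]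

theorem IsGeodesicSegmentFrom.midpointConvex {x : X} {G : Set X}
    (hG : IsGeodesicSegmentFrom x G) : MidpointConvex G := by
  obtain ⟨L, γ, -, -, hiso, rfl⟩ := hG
  rintro _ ⟨s, hs, rfl⟩ _ ⟨t, ht, rfl⟩
  have hm : (s + t) / 2 ∈ Icc 0 L := ⟨by linarith [hs.1, ht.1], by linarith [hs.2, ht.2]⟩
  refine ⟨γ ((s + t) / 2), ⟨?_, ?_⟩, ⟨_, hm, rfl⟩⟩
  · rw [hiso s hs _ hm, hiso s hs t ht, show s - (s + t) / 2 = (s - t) / 2 by ring, abs_div,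
      abs_two]
  · rw [hiso t ht _ hm, hiso s hs t ht, show t - (s + t) / 2 = -((s - t) / 2) by ring, abs_neg,
      abs_div, abs_two]

theorem TdeltaClosed.inter {A C : Set X} (hA : TdeltaClosed A) (hC : TdeltaClosed C) :
    TdeltaClosed (A ∩ C) := fun u hu hb x hx =>
  ⟨hA u (fun n => (hu n).1) hb x hx, hC u (fun n => (hu n).2) hb x hx⟩

theorem tendsto_dist_of_mem_closure {a : ℕ → X} {ρ : X → ℝ} (hρ : Continuous ρ) {H : Set X}
    (hH : ∀ z ∈ H, Tendsto (fun n => dist z (a n)) atTop (𝓝 (ρ z))) :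
    ∀ z ∈ closure H, Tendsto (fun n => dist z (a n)) atTop (𝓝 (ρ z)) :=
  closure_minimal hH <| (LipschitzWith.uniformEquicontinuous (fun n z => dist z (a n)) 1
    fun n => LipschitzWith.dist_left (a n)).equicontinuous.isClosed_setOfPred_tendsto hρ

theorem Ultrafilter.exists_tendsto_dist {U : Ultrafilter X} {S : Set X}
    (hS : Bornology.IsBounded S) (hSU : S ∈ U) (z : X) :
    ∃ c, Tendsto (dist z ·) U (𝓝 c) := by
  obtain ⟨R, hR⟩ := hS.subset_closedBall z
  obtain ⟨c, -, hc⟩ := (isCompact_Icc (a := (0 : ℝ)) (b := R)).ultrafilter_le_nhds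
    (U.map (dist z ·)) <| by
      rw [Ultrafilter.coe_map, le_principal_iff, Filter.mem_map]
      exact mem_of_superset hSU fun w hw => ⟨dist_nonneg, by simpa [dist_comm] using hR hw⟩
  exact ⟨c, hc⟩

theorem lipschitzWith_one_of_tendsto_dist {F : Filter X} [F.NeBot] {ρ : X → ℝ}
    (hρ : ∀ z, Tendsto (dist z ·) F (𝓝 (ρ z))) : LipschitzWith 1 ρ :=
  LipschitzWith.of_dist_le_mul fun z z' => by
    simpa using le_of_tendsto' ((hρ z).dist (hρ z')) fun w => by
      simpa [Real.dist_eq] using abs_dist_sub_le z z' w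

theorem Ultrafilter.le_nhds_coconvexTopology {U : Ultrafilter X} {y : X}
    (h : ∀ C, IsClosed C → GeodesicallyConvex C → C ∈ U → y ∈ C) :
    ↑U ≤ @nhds X (coconvexTopology X) y := by
  rw [coconvexTopology, TopologicalSpace.nhds_generateFrom]
  refine le_iInf₂ fun s ⟨hys, C, hC, hCc, hs⟩ => le_principal_iff.2 ?_
  subst hs
  exact (U.mem_or_compl_mem C).resolve_left fun hCU => hys (h C hC hCc hCU)

namespace IsCAT0

variable (hX : IsCAT0 X)
include hX

theorem dist_sq_le {x y m : X} (hm : IsMidpoint x y m) (z : X) :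
    dist z m ^ 2 ≤ dist z x ^ 2 / 2 + dist z y ^ 2 / 2 - dist x y ^ 2 / 4 :=
  hX.2.2 x y z m hm

theorem isMidpoint_unique {x y m m' : X} (hm : IsMidpoint x y m) (hm' : IsMidpoint x y m') :
    m = m' := by
  have h := hX.dist_sq_le hm m'
  rw [dist_comm m' x, dist_comm m' y, hm'.1, hm'.2] at h
  exact (dist_le_zero.mp (by nlinarith [dist_nonneg (x := m') (y := m)])).symm

noncomputable def midpoint (x y : X) : X := (hX.2.1 x y).choose

theorem isMidpoint_midpoint (x y : X) : IsMidpoint x y (hX.midpoint x y) :=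
  (hX.2.1 x y).choose_spec

theorem dist_sq_le_of_isMidpoint_of_isMidpoint {a b b' m m' : X} (hm : IsMidpoint a b m)
    (hm' : IsMidpoint a b' m') : dist m m' ^ 2 ≤ 2 * (dist a b + dist a b') * dist b b' := by
  have h := hX.dist_sq_le hm m'
  have hm'a : dist m' a = dist a b' / 2 := by rw [dist_comm]; exact hm'.1
  have hm'b : dist m' b ≤ dist a b' / 2 + dist b b' := by
    linarith [dist_triangle m' b' b, hm'.2, dist_comm m' b', dist_comm b' b]
  have hab' := dist_triangle a b b'
  have hbb' := dist_triangle_left b b' a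
  rw [dist_comm m' m, hm'a] at h
  nlinarith [dist_nonneg (x := m') (y := b), dist_nonneg (x := a) (y := b),
    dist_nonneg (x := a) (y := b'), dist_nonneg (x := b) (y := b')]

theorem continuous_midpoint : Continuous (Function.uncurry hX.midpoint) := by
  refine continuous_iff_continuousAt.2 fun ⟨a, b⟩ => tendsto_iff_dist_tendsto_zero.2 ?_
  let bound : X × X → ℝ := fun q =>
    √(2 * (dist a b + dist a q.2) * dist b q.2) + √(2 * (dist q.2 a + dist q.2 q.1) * dist a q.1)
  have hbound : Tendsto bound (𝓝 (a, b)) (𝓝 0) := by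
    have : Continuous bound := by fun_prop
    simpa [bound] using this.tendsto (a, b)
  refine squeeze_zero (fun _ => dist_nonneg) (fun q => ?_) hbound
  have h1 := hX.dist_sq_le_of_isMidpoint_of_isMidpoint (hX.isMidpoint_midpoint a b)
    (hX.isMidpoint_midpoint a q.2)
  have h2 := hX.dist_sq_le_of_isMidpoint_of_isMidpoint (hX.isMidpoint_midpoint a q.2).symm
    (hX.isMidpoint_midpoint q.1 q.2).symm
  calc dist (hX.midpoint q.1 q.2) (hX.midpoint a b)
      ≤ dist (hX.midpoint a b) (hX.midpoint a q.2) +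
          dist (hX.midpoint a q.2) (hX.midpoint q.1 q.2) := by
        rw [dist_comm]; exact dist_triangle _ _ _
    _ ≤ bound q := add_le_add (Real.le_sqrt_of_sq_le h1) (Real.le_sqrt_of_sq_le h2)

section Geodesic

/-- Level `n` of the dyadic subdivision of a geodesic from `x` to `y`: the point with index
`k ≤ 2 ^ n` sits at parameter `k / 2 ^ n`. -/
noncomputable def dyadicPoint (x y : X) : ℕ → ℕ → X
  | 0, k => if k = 0 then x else y
  | n + 1, k =>
    if k % 2 = 0 then dyadicPoint x y n (k / 2)
    else hX.midpoint (dyadicPoint x y n (k / 2)) (dyadicPoint x y n (k / 2 + 1))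

variable (x y : X)

theorem dyadicPoint_succ_two_mul (n k : ℕ) :
    hX.dyadicPoint x y (n + 1) (2 * k) = hX.dyadicPoint x y n k := by
  simp [dyadicPoint]

theorem dyadicPoint_succ_two_mul_add_one (n k : ℕ) :
    hX.dyadicPoint x y (n + 1) (2 * k + 1) =
      hX.midpoint (hX.dyadicPoint x y n k) (hX.dyadicPoint x y n (k + 1)) := by
  simp [dyadicPoint, Nat.add_mod, Nat.add_div]

theorem dyadicPoint_zero (n : ℕ) : hX.dyadicPoint x y n 0 = x := by
  induction n with
  | zero => simp [dyadicPoint]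
  | succ n ih => simpa [ih] using hX.dyadicPoint_succ_two_mul x y n 0

theorem dyadicPoint_two_pow (n : ℕ) : hX.dyadicPoint x y n (2 ^ n) = y := by
  induction n with
  | zero => simp [dyadicPoint]
  | succ n ih => rw [pow_succ, mul_comm, hX.dyadicPoint_succ_two_mul, ih]

theorem dist_dyadicPoint_succ (n : ℕ) {k : ℕ} (hk : k < 2 ^ n) :
    dist (hX.dyadicPoint x y n k) (hX.dyadicPoint x y n (k + 1)) = dist x y / 2 ^ n := by
  induction n generalizing k with
  | zero => simp_all [dyadicPoint]
  | succ n ih =>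
    obtain ⟨j, rfl | rfl⟩ : ∃ j, k = 2 * j ∨ k = 2 * j + 1 := ⟨k / 2, by omega⟩
    · have hm := hX.isMidpoint_midpoint (hX.dyadicPoint x y n j) (hX.dyadicPoint x y n (j + 1))
      rw [hX.dyadicPoint_succ_two_mul, hX.dyadicPoint_succ_two_mul_add_one, hm.1,
        ih (by rw [pow_succ] at hk; omega), pow_succ]
      ring
    · have hm := hX.isMidpoint_midpoint (hX.dyadicPoint x y n j) (hX.dyadicPoint x y n (j + 1))
      rw [show 2 * j + 1 + 1 = 2 * (j + 1) by ring, hX.dyadicPoint_succ_two_mul,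
        hX.dyadicPoint_succ_two_mul_add_one, dist_comm, hm.2, ih (by rw [pow_succ] at hk; omega),
        pow_succ]
      ring

theorem dist_dyadicPoint (n : ℕ) {k l : ℕ} (hk : k ≤ 2 ^ n) (hl : l ≤ 2 ^ n) :
    dist (hX.dyadicPoint x y n k) (hX.dyadicPoint x y n l) =
      |(k : ℝ) / 2 ^ n * dist x y - l / 2 ^ n * dist x y| := by
  have key : ∀ {i j}, i ≤ j → j ≤ 2 ^ n →
      dist (hX.dyadicPoint x y n i) (hX.dyadicPoint x y n j) = (j - i) * (dist x y / 2 ^ n) := by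
    intro i j hij hj
    refine dist_eq_of_dist_succ_le (fun i hi => (hX.dist_dyadicPoint_succ x y n hi).le) ?_ hij hj
    rw [hX.dyadicPoint_zero, hX.dyadicPoint_two_pow]
    push_cast
    field_simp
    rfl
  rcases le_total k l with h | h
  · rw [key h hl, abs_sub_comm, abs_of_nonneg (sub_nonneg.2 (by gcongr))]
    ring
  · rw [dist_comm, key h hk, abs_of_nonneg (sub_nonneg.2 (by gcongr))]
    ring

noncomputable def dyadicApprox (n : ℕ) (t : ℝ) : X :=
  hX.dyadicPoint x y n ⌊t * 2 ^ n / dist x y⌋₊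

theorem dyadicApprox_zero (n : ℕ) : hX.dyadicApprox x y n 0 = x := by
  simp [dyadicApprox, hX.dyadicPoint_zero]

theorem dyadicApprox_dist (n : ℕ) : hX.dyadicApprox x y n (dist x y) = y := by
  rcases (dist_nonneg (x := x) (y := y)).eq_or_lt with h | h
  · rw [← dist_eq_zero.1 h.symm]
    simp [dyadicApprox, hX.dyadicPoint_zero]
  · rw [dyadicApprox, mul_div_right_comm, div_self h.ne', one_mul, ← Nat.cast_ofNat,
      ← Nat.cast_pow, Nat.floor_natCast, hX.dyadicPoint_two_pow]

theorem abs_dist_dyadicApprox_sub_le {t t' : ℝ} (ht : t ∈ Icc 0 (dist x y))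
    (ht' : t' ∈ Icc 0 (dist x y)) (n : ℕ) :
    |(dist (hX.dyadicApprox x y n t) (hX.dyadicApprox x y n t') - |t - t'|)| ≤
      2 * (dist x y / 2 ^ n) := by
  rw [dyadicApprox, dyadicApprox, hX.dist_dyadicPoint x y n (floor_mul_two_pow_div_le ht n)
    (floor_mul_two_pow_div_le ht' n)]
  refine (abs_abs_sub_abs_le_abs_sub _ _).trans ?_
  have h := abs_floor_mul_two_pow_div_sub_le ht n
  have h' := abs_floor_mul_two_pow_div_sub_le ht' n
  rw [abs_le] at h h' ⊢
  constructor <;> linarith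

theorem dist_dyadicApprox_succ_le {t : ℝ} (ht : t ∈ Icc 0 (dist x y)) (n : ℕ) :
    dist (hX.dyadicApprox x y n t) (hX.dyadicApprox x y (n + 1) t) ≤ 3 * dist x y / 2 / 2 ^ n := by
  have hk := floor_mul_two_pow_div_le ht n
  have h2k : 2 * ⌊t * 2 ^ n / dist x y⌋₊ ≤ 2 ^ (n + 1) := by rw [pow_succ]; omega
  have h := abs_floor_mul_two_pow_div_sub_le ht n
  have h' := abs_floor_mul_two_pow_div_sub_le ht (n + 1)
  rw [dyadicApprox, dyadicApprox, ← hX.dyadicPoint_succ_two_mul,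
    hX.dist_dyadicPoint x y (n + 1) h2k (floor_mul_two_pow_div_le ht (n + 1))]
  push_cast
  rw [pow_succ] at h' ⊢
  rw [abs_le] at h h' ⊢
  have e : 2 * (⌊t * 2 ^ n / dist x y⌋₊ : ℝ) / (2 ^ n * 2) * dist x y =
      ⌊t * 2 ^ n / dist x y⌋₊ / 2 ^ n * dist x y := by field_simp
  have e' : dist x y / (2 ^ n * 2) = dist x y / 2 ^ n / 2 := by ring
  have e'' : 3 * dist x y / 2 / 2 ^ n = 3 / 2 * (dist x y / 2 ^ n) := by ring
  rw [e, e'']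
  rw [e'] at h'
  constructor <;> linarith

end Geodesic

theorem exists_geodesic (x y : X) :
    ∃ γ : ℝ → X, γ 0 = x ∧ γ (dist x y) = y ∧
      ∀ s ∈ Icc 0 (dist x y), ∀ t ∈ Icc 0 (dist x y), dist (γ s) (γ t) = |s - t| := by
  have : CompleteSpace X := hX.1
  have : Nonempty X := ⟨x⟩
  let γ : ℝ → X := fun t => limUnder atTop (hX.dyadicApprox x y · t)
  have hγ : ∀ t ∈ Icc 0 (dist x y), Tendsto (hX.dyadicApprox x y · t) atTop (𝓝 (γ t)) :=
    fun t ht => tendsto_nhds_limUnder <| cauchySeq_tendsto_of_complete <|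
      cauchySeq_of_le_geometric_two (hX.dist_dyadicApprox_succ_le x y ht)
  have h0 : 0 ∈ Icc 0 (dist x y) := ⟨le_rfl, dist_nonneg⟩
  have hD : dist x y ∈ Icc 0 (dist x y) := ⟨dist_nonneg, le_rfl⟩
  refine ⟨γ, tendsto_nhds_unique (hγ 0 h0) ?_, tendsto_nhds_unique (hγ _ hD) ?_,
    fun t ht t' ht' => tendsto_nhds_unique ((hγ t ht).dist (hγ t' ht')) ?_⟩
  · simp [hX.dyadicApprox_zero]
  · simp [hX.dyadicApprox_dist]
  · have hsmall : Tendsto (fun n : ℕ => 2 * (dist x y / 2 ^ n)) atTop (𝓝 0) := by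
      simpa [div_eq_mul_inv] using ((tendsto_pow_atTop_nhds_zero_of_lt_one
        (r := (1 / 2 : ℝ)) (by norm_num) (by norm_num)).const_mul (dist x y)).const_mul 2
    exact tendsto_iff_norm_sub_tendsto_zero.2 <| squeeze_zero (fun _ => norm_nonneg _)
      (hX.abs_dist_dyadicApprox_sub_le x y ht ht') hsmall

theorem exists_isNearestPoint {S : Set X} (hne : S.Nonempty) (hcl : IsClosed S)
    (hS : MidpointConvex S) (z : X) : ∃ p, IsNearestPoint z S p := by
  have : CompleteSpace X := hX.1
  obtain ⟨p, hpS, hp⟩ := exists_isMinOn_of_midpointConvex hne hcl hS (g := fun w => dist z w ^ 2)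
    (by fun_prop) ⟨0, by rintro _ ⟨w, -, rfl⟩; positivity⟩
    fun a _ b _ m _ hm => hX.dist_sq_le hm z
  exact ⟨p, hpS, fun q hq => pow_le_pow_iff_left₀ dist_nonneg dist_nonneg two_ne_zero |>.1 (hp hq)⟩

/-- Iterating the CN inequality at midpoints between `p` and `c` gives
`dist z p ^ 2 + (1 - 2⁻ⁿ) dist p c ^ 2 ≤ dist z c ^ 2` for all `n`. -/
theorem _root_.IsNearestPoint.dist_sq_add_dist_sq_le {S : Set X} (hS : MidpointConvex S) {z p : X}
    (hp : IsNearestPoint z S p) {c : X} (hc : c ∈ S) :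
    dist z p ^ 2 + dist p c ^ 2 ≤ dist z c ^ 2 := by
  have key : ∀ n : ℕ, ∀ c ∈ S,
      dist z p ^ 2 + (1 - (1 / 2 : ℝ) ^ n) * dist p c ^ 2 ≤ dist z c ^ 2 := by
    intro n
    induction n with
    | zero =>
      intro c hc
      simpa using pow_le_pow_left₀ dist_nonneg (hp.2 c hc) 2
    | succ n ih =>
      intro c hc
      obtain ⟨m, hm, hmS⟩ := hS p hp.1 c hc
      have h1 := ih m hmS
      have h2 := hX.dist_sq_le hm z
      rw [hm.1] at h1
      rw [pow_succ (1 / 2 : ℝ) n]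
      linarith
  have hlim := (((tendsto_pow_atTop_nhds_zero_of_lt_one (r := (1 / 2 : ℝ)) (by norm_num)
    (by norm_num)).const_sub 1).mul_const (dist p c ^ 2)).const_add (dist z p ^ 2)
  rw [sub_zero, one_mul] at hlim
  exact le_of_tendsto_of_tendsto' hlim tendsto_const_nhds fun n => key n c hc

theorem _root_.IsNearestPoint.dist_le {S : Set X} (hS : MidpointConvex S) {z p : X}
    (hp : IsNearestPoint z S p) {c : X} (hc : c ∈ S) : dist p c ≤ dist z c :=
  (pow_le_pow_iff_left₀ dist_nonneg dist_nonneg two_ne_zero).1 <| by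
    nlinarith [hp.dist_sq_add_dist_sq_le hX hS hc, sq_nonneg (dist z p)]

theorem midpointConvex_closure {S : Set X} (hS : MidpointConvex S) :
    MidpointConvex (closure S) := by
  refine fun a ha b hb => ⟨hX.midpoint a b, hX.isMidpoint_midpoint a b,
    map_mem_closure₂ hX.continuous_midpoint ha hb fun a ha b hb => ?_⟩
  obtain ⟨m, hm, hmS⟩ := hS a ha b hb
  rwa [← hX.isMidpoint_unique hm (hX.isMidpoint_midpoint a b)]

theorem midpointConvex_closedBall (c : X) (r : ℝ) : MidpointConvex (closedBall c r) := by
  intro a ha b hb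
  refine ⟨hX.midpoint a b, hX.isMidpoint_midpoint a b, ?_⟩
  have h := hX.dist_sq_le (hX.isMidpoint_midpoint a b) c
  rw [mem_closedBall, dist_comm] at ha hb ⊢
  have hr : 0 ≤ r := dist_nonneg.trans ha
  nlinarith [dist_nonneg (x := c) (y := hX.midpoint a b), dist_nonneg (x := c) (y := a),
    dist_nonneg (x := c) (y := b), dist_nonneg (x := a) (y := b)]

theorem _root_.GeodesicallyConvex.midpointConvex {C : Set X} (hC : GeodesicallyConvex C) :
    MidpointConvex C := by
  intro a ha b hb
  obtain ⟨γ, hγ0, hγ1, hiso⟩ := hX.exists_geodesic a b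
  have hd : 0 ≤ dist a b := dist_nonneg
  have hmid : dist a b / 2 ∈ Icc 0 (dist a b) := ⟨by linarith, by linarith⟩
  refine ⟨γ (dist a b / 2), ⟨?_, ?_⟩, hC a ha b hb _ ⟨γ, hγ0, hγ1, hiso, rfl⟩ ⟨_, hmid, rfl⟩⟩
  · have h := hiso 0 ⟨le_rfl, hd⟩ _ hmid
    rw [hγ0] at h
    rw [h, abs_of_nonpos (by linarith)]; ring
  · have h := hiso _ ⟨hd, le_rfl⟩ _ hmid
    rw [hγ1] at h
    rw [h, abs_of_nonneg (by linarith)]; ring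

theorem tdeltaClosed_of_isClosed_of_midpointConvex {C : Set X} (hC : IsClosed C) (hCm : MidpointConvex C) :
    TdeltaClosed C := by
  intro u hu _ x hx
  obtain ⟨p, hp⟩ := hX.exists_isNearestPoint ⟨u 0, hu 0⟩ hC hCm x
  obtain ⟨γ, hγ0, hγ1, hiso⟩ := hX.exists_geodesic x p
  have hL : dist x p ∈ Icc 0 (dist x p) := ⟨dist_nonneg, le_rfl⟩
  have hnear : ∀ n, IsNearestPoint (u n) (γ '' Icc 0 (dist x p)) p := by
    refine fun n => ⟨⟨_, hL, hγ1⟩, ?_⟩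
    rintro _ ⟨t, ht, rfl⟩
    have hxt := hiso 0 ⟨le_rfl, hL.1⟩ t ht
    have htp := hiso t ht _ hL
    rw [hγ0] at hxt
    rw [hγ1] at htp
    have hq := hp.of_dist_add_dist_eq (q := γ t) (by
      rw [hxt, htp, abs_of_nonpos (by linarith [ht.1]), abs_of_nonpos (by linarith [ht.2])]; ring)
    rw [dist_comm (u n), dist_comm (u n)]
    exact hq.dist_le hX hCm (hu n)
  have hlim := hx _ ⟨_, γ, hL.1, hγ0, hiso, rfl⟩ (fun _ => p) hnear
  exact tendsto_const_nhds_iff.1 hlim ▸ hp.1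

theorem le_coconvexTopology {TΔ : TopologicalSpace X} (hTΔ : IsWeakTopology TΔ) :
    TΔ ≤ coconvexTopology X := by
  rw [coconvexTopology, TopologicalSpace.le_generateFrom_iff_subset_isOpen]
  rintro _ ⟨C, hC, hCc, rfl⟩
  exact ((hTΔ C).2 (hX.tdeltaClosed_of_isClosed_of_midpointConvex hC (hCc.midpointConvex hX))).isOpen_compl

noncomputable def midpointHullSeq (S : Set X) : ℕ → Set X
  | 0 => S
  | n + 1 => midpointHullSeq S n ∪
      image2 hX.midpoint (midpointHullSeq S n) (midpointHullSeq S n)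

noncomputable def midpointHull (S : Set X) : Set X := ⋃ n, hX.midpointHullSeq S n

theorem subset_midpointHull (S : Set X) : S ⊆ hX.midpointHull S :=
  subset_iUnion (hX.midpointHullSeq S) 0

theorem monotone_midpointHullSeq (S : Set X) : Monotone (hX.midpointHullSeq S) :=
  monotone_nat_of_le_succ fun _ => subset_union_left

theorem midpointHull_countable {S : Set X} (hS : S.Countable) : (hX.midpointHull S).Countable := by
  refine countable_iUnion fun n => ?_
  induction n with
  | zero => exact hS
  | succ n ih => exact ih.union (ih.image2 ih _)

theorem midpointConvex_midpointHull (S : Set X) : MidpointConvex (hX.midpointHull S) := by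
  rintro a ⟨_, ⟨i, rfl⟩, ha⟩ b ⟨_, ⟨j, rfl⟩, hb⟩
  have hmono := hX.monotone_midpointHullSeq S
  exact ⟨hX.midpoint a b, hX.isMidpoint_midpoint a b, mem_iUnion.2 ⟨max i j + 1,
    Or.inr (mem_image2_of_mem (hmono (le_max_left i j) ha) (hmono (le_max_right i j) hb))⟩⟩

theorem midpointHull_subset {S T : Set X} (hST : S ⊆ T) (hT : MidpointConvex T) :
    hX.midpointHull S ⊆ T := by
  refine iUnion_subset fun n => ?_
  induction n with
  | zero => exact hST
  | succ n ih =>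
    rintro _ (hz | ⟨a, ha, b, hb, rfl⟩)
    · exact ih hz
    · obtain ⟨m, hm, hmT⟩ := hT a (ih ha) b (ih hb)
      rwa [← hX.isMidpoint_unique hm (hX.isMidpoint_midpoint a b)]

theorem midpointHull_iUnion_subset {T : ℕ → Set X} (hT : Monotone T) :
    hX.midpointHull (⋃ k, T k) ⊆ ⋃ k, hX.midpointHull (T k) := by
  have hmono : Monotone fun k => hX.midpointHull (T k) := fun i j hij =>
    hX.midpointHull_subset ((hT hij).trans (hX.subset_midpointHull _))
      (hX.midpointConvex_midpointHull _)
  refine hX.midpointHull_subset (iUnion_mono fun k => hX.subset_midpointHull _) ?_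
  rintro a ha b hb
  obtain ⟨i, hi⟩ := mem_iUnion.1 ha
  obtain ⟨j, hj⟩ := mem_iUnion.1 hb
  obtain ⟨m, hm, hmH⟩ := hX.midpointConvex_midpointHull (T (max i j)) a
    (hmono (le_max_left i j) hi) b (hmono (le_max_right i j) hj)
  exact ⟨m, hm, mem_iUnion.2 ⟨_, hmH⟩⟩

/-- The sequence is built stage by stage: `a n` approximates, within `1 / (n + 1)`, the limit
distances `ρ` at the first `n + 1` points of fixed enumerations of the hulls of
`{x, a 0, …, a (k - 1)}` for `k ≤ n`. -/
theorem exists_seq_tendsto_dist_on_midpointHull {F : Filter X} [F.NeBot] {A : Set X}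
    (hA : A ∈ F) {ρ : X → ℝ} (hρ : ∀ z, Tendsto (dist z ·) F (𝓝 (ρ z))) (x : X) :
    ∃ a : ℕ → X, (∀ n, a n ∈ A) ∧ ∀ z ∈ hX.midpointHull (insert x (range a)),
      Tendsto (fun n => dist z (a n)) atTop (𝓝 (ρ z)) := by
  have : Nonempty X := ⟨x⟩
  choose e he using fun l : List X => countable_iff_exists_subset_range.1
    (hX.midpointHull_countable ((List.finite_toSet l).countable.insert x))
  let P : List X → Set X := fun l => A ∩ {w | ∀ k ∈ Finset.range (l.length + 1),
    ∀ i ∈ Finset.range (l.length + 1),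
      dist (dist (e (l.take k) i) w) (ρ (e (l.take k) i)) < 1 / (l.length + 1)}
  have hP : ∀ l, P l ∈ F := fun l => inter_mem hA <|
    (eventually_all_finset _).2 fun k _ => (eventually_all_finset _).2 fun i _ =>
      (hρ _).eventually (ball_mem_nhds _ (by positivity))
  obtain ⟨a, ha⟩ := exists_seq_mem_of_prefix fun l => F.nonempty_of_mem (hP l)
  refine ⟨a, fun n => (ha n).1, fun z hz => ?_⟩
  let T : ℕ → Set X := fun k => insert x {z | z ∈ (List.range k).map a}
  have hT : Monotone T := fun i j hij => insert_subset_insert (monotone_setOf_mem_map_range a hij)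
  have hTunion : insert x (range a) = ⋃ k, T k := by
    rw [← iUnion_setOf_mem_map_range, insert_iUnion]
  rw [hTunion] at hz
  obtain ⟨k, hk⟩ := mem_iUnion.1 (hX.midpointHull_iUnion_subset hT hz)
  obtain ⟨i, rfl⟩ := he _ hk
  refine Metric.tendsto_atTop.2 fun ε hε => ?_
  obtain ⟨N, hN⟩ := exists_nat_one_div_lt hε
  refine ⟨max N (max k i), fun n hn => ?_⟩
  have h := (ha n).2 k (by simp; omega) i (by simp; omega)
  rw [List.length_map, List.length_range, ← List.map_take, List.take_range,
    min_eq_left (by omega)] at h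
  calc _ < 1 / ((n : ℝ) + 1) := h
    _ ≤ 1 / ((N : ℝ) + 1) := by gcongr; exact_mod_cast (le_max_left _ _).trans hn
    _ < ε := hN

theorem weakConv_of_isMinOn {Q : Set X} (hQ : IsClosed Q) (hQm : MidpointConvex Q) {a : ℕ → X}
    (haQ : ∀ n, a n ∈ Q) {ρ : X → ℝ}
    (hρ : ∀ z ∈ Q, Tendsto (fun n => dist z (a n)) atTop (𝓝 (ρ z))) {x : X} (hxQ : x ∈ Q)
    (hx : IsMinOn ρ Q x) : WeakConv a x := by
  intro G hG p hp
  refine hG.isCompact.tendsto_nhds_of_unique_mapClusterPt (Eventually.of_forall fun n => (hp n).1)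
    fun q _ hq => ?_
  obtain ⟨φ, hφ, hpφ⟩ := hq.tendsto_subseq
  obtain ⟨q', hq'⟩ := hX.exists_isNearestPoint ⟨x, hxQ⟩ hQ hQm q
  -- the obtuse angles at `p n` on `G` and at `q'` on `Q`
  have key : ∀ n, dist q' (a n) ^ 2 + dist (p n) x ^ 2 ≤ (dist q (p n) + dist x (a n)) ^ 2 := by
    intro n
    have h1 := (hp n).dist_sq_add_dist_sq_le hX hG.midpointConvex hG.mem
    have h2 := hq'.dist_le hX hQm (haQ n)
    have h3 := dist_triangle q (p n) (a n)
    rw [dist_comm (a n) x, dist_comm (a n) (p n)] at h1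
    have hs : dist (p n) (a n) ≤ dist x (a n) :=
      (pow_le_pow_iff_left₀ dist_nonneg dist_nonneg two_ne_zero).1 (by nlinarith)
    have hq'a : dist q' (a n) ≤ dist q (p n) + dist (p n) (a n) := h2.trans h3
    nlinarith [mul_le_mul hq'a hq'a dist_nonneg (by positivity),
      mul_le_mul_of_nonneg_left hs (dist_nonneg (x := q) (y := p n))]
  have hlim := le_of_tendsto_of_tendsto'
    ((((hρ q' hq'.1).comp hφ.tendsto_atTop).pow 2).add ((hpφ.dist tendsto_const_nhds).pow 2))
    ((((tendsto_const_nhds.dist hpφ).add ((hρ x hxQ).comp hφ.tendsto_atTop))).pow 2)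
    fun n => key (φ n)
  have hρx : 0 ≤ ρ x := ge_of_tendsto' (hρ x hxQ) fun _ => dist_nonneg
  have hmin : ρ x ^ 2 ≤ ρ q' ^ 2 := pow_le_pow_left₀ hρx (hx hq'.1) 2
  simp only [dist_self, zero_add] at hlim
  have hqx : dist q x ^ 2 ≤ 0 := by linarith
  exact dist_le_zero.1 (by nlinarith [dist_nonneg (x := q) (y := x)])

section LimitDistance

variable {F : Filter X} [F.NeBot] {ρ : X → ℝ} (hρ : ∀ z, Tendsto (dist z ·) F (𝓝 (ρ z)))
include hρ

theorem exists_isMinOn_of_tendsto_dist : ∃ y, IsMinOn ρ univ y := by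
  have : CompleteSpace X := hX.1
  have hρ0 : ∀ z, 0 ≤ ρ z := fun z => ge_of_tendsto' (hρ z) fun _ => dist_nonneg
  obtain ⟨y, -, hy⟩ := exists_isMinOn_of_midpointConvex (F.nonempty_of_mem univ_mem)
    isClosed_univ (fun a _ b _ => ⟨_, hX.isMidpoint_midpoint a b, mem_univ _⟩)
    (g := fun z => ρ z ^ 2)
    ((lipschitzWith_one_of_tendsto_dist hρ).continuous.pow 2).continuousOn
    ⟨0, by rintro _ ⟨z, -, rfl⟩; positivity⟩
    fun a _ b _ m _ hm => le_of_tendsto_of_tendsto' ((hρ m).pow 2)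
      (((((hρ a).pow 2).div_const 2).add (((hρ b).pow 2).div_const 2)).sub_const _)
      fun w => by simpa only [dist_comm w] using hX.dist_sq_le hm w
  exact ⟨y, fun z _ => (pow_le_pow_iff_left₀ (hρ0 y) (hρ0 z) two_ne_zero).1 (hy (mem_univ z))⟩

theorem mem_of_isMinOn_of_tendsto_dist {y : X} (hy : IsMinOn ρ univ y) {C : Set X}
    (hC : IsClosed C) (hCm : MidpointConvex C) (hCF : C ∈ F) : y ∈ C := by
  obtain ⟨p, hp⟩ := hX.exists_isNearestPoint (F.nonempty_of_mem hCF) hC hCm y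
  have h : dist y p ^ 2 + ρ p ^ 2 ≤ ρ y ^ 2 :=
    le_of_tendsto_of_tendsto (((hρ p).pow 2).const_add _) ((hρ y).pow 2)
      (mem_of_superset hCF fun w hw => hp.dist_sq_add_dist_sq_le hX hCm hw)
  have hmin : ρ y ^ 2 ≤ ρ p ^ 2 :=
    pow_le_pow_left₀ (ge_of_tendsto' (hρ y) fun _ => dist_nonneg) (hy (mem_univ p)) 2
  obtain rfl : y = p := dist_le_zero.1 (by nlinarith [dist_nonneg (x := y) (y := p)])
  exact hp.1

end LimitDistance

theorem mem_of_mem_closure_coconvexTopology {x₀ : X} {r : ℝ}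
    (hT2 : @T2Space (closedBall x₀ r) (TopologicalSpace.induced Subtype.val (coconvexTopology X)))
    {A : Set X} (hAK : A ⊆ closedBall x₀ r) (hA : TdeltaClosed A) {x : X}
    (hxK : x ∈ closedBall x₀ r) (hx : x ∈ closure[coconvexTopology X] A) : x ∈ A := by
  obtain ⟨U, hAU, hUx⟩ := (@mem_closure_iff_ultrafilter X _ _ (coconvexTopology X)).1 hx
  have hKU : closedBall x₀ r ∈ U := mem_of_superset hAU hAK
  choose ρ hρ using Ultrafilter.exists_tendsto_dist isBounded_closedBall hKU
  obtain ⟨y, hy⟩ := hX.exists_isMinOn_of_tendsto_dist hρ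
  have hUy : ↑U ≤ @nhds X (coconvexTopology X) y := U.le_nhds_coconvexTopology fun C hC hCc =>
    hX.mem_of_isMinOn_of_tendsto_dist hρ hy hC (hCc.midpointConvex hX)
  obtain rfl : x = y := @eq_of_le_nhds_of_t2Space_subtype X (coconvexTopology X) _ hT2 _ _ hKU _ _
    hxK (hX.mem_of_isMinOn_of_tendsto_dist hρ hy isClosed_closedBall
      (hX.midpointConvex_closedBall x₀ r) hKU) hUx hUy
  obtain ⟨a, haA, ha⟩ := hX.exists_seq_tendsto_dist_on_midpointHull hAU hρ x
  have hsub := subset_closure.trans' (hX.subset_midpointHull (insert x (range a)))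
  refine hA a haA (isBounded_closedBall.subset (range_subset_iff.2 fun n => hAK (haA n))) x
    (hX.weakConv_of_isMinOn isClosed_closure
      (hX.midpointConvex_closure (hX.midpointConvex_midpointHull _))
      (fun n => hsub (mem_insert_of_mem _ ⟨n, rfl⟩))
      (tendsto_dist_of_mem_closure (lipschitzWith_one_of_tendsto_dist hρ).continuous ha)
      (hsub (mem_insert _ _)) (hy.on_subset (subset_univ _)))

end IsCAT0

end MetricSpace

/-- If on every closed ball of a CAT(0) space the coconvex
topology `T_co` is Hausdorff, then `T_co` and `T_Δ` coincide on all bounded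
subsets. -/
theorem coconvex_eq_weak_on_bounded_of_hausdorff_on_balls
    (X : Type*) [MetricSpace X] (hX : IsCAT0 X)
    (TΔ : TopologicalSpace X) (hTΔ : IsWeakTopology TΔ)
    (h : ∀ (x : X) (r : ℝ),
        @T2Space (Metric.closedBall x r)
          (TopologicalSpace.induced (Subtype.val : Metric.closedBall x r → X)
            (coconvexTopology X))) :
    ∀ B : Set X, Bornology.IsBounded B →
      TopologicalSpace.induced (Subtype.val : B → X) (coconvexTopology X) =
        TopologicalSpace.induced (Subtype.val : B → X) TΔ := by
  intro B hB
  refine le_antisymm (induced_le_induced_of_mem_of_mem_closure fun A hA b hb hbA => ?_)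
    (induced_mono (hX.le_coconvexTopology hTΔ))
  obtain ⟨r, hBr⟩ := hB.subset_closedBall b
  have hAK : TdeltaClosed (A ∩ closedBall b r) := ((hTΔ A).1 hA).inter
    (hX.tdeltaClosed_of_isClosed_of_midpointConvex isClosed_closedBall (hX.midpointConvex_closedBall b r))
  exact (hX.mem_of_mem_closure_coconvexTopology (h b r) inter_subset_right hAK (hBr hb)
    ((@closure_mono X (coconvexTopology X) _ _ (inter_subset_inter_right A hBr)) hbA)).1
end

section
/- Let X be a CAT(0) space that cannot be written as a union of finitely many metrically closed convex proper subsets. Then any two nonempty T_co-open subsets of X intersect; in particular, if X contains more than one point, the coconvex topology T_co is not Hausdorff. -/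
open Filter Topology Metric Set

private lemma exists_finite_inter_aux {X : Type*} {S : Set (Set X)} {U : Set X}
    (hU : TopologicalSpace.GenerateOpen S U) :
    ∀ x ∈ U, ∃ t : Set (Set X), t ⊆ S ∧ t.Finite ∧ x ∈ ⋂₀ t ∧ ⋂₀ t ⊆ U := by
  induction hU with
  | basic s hs =>
      intro x hx
      exact ⟨{s}, by simpa using hs, Set.finite_singleton s, by simpa using hx, by simp⟩
  | univ =>
      intro x hx
      exact ⟨∅, by simp, Set.finite_empty, by simp, by simp⟩
  | inter u v hu hv ihu ihv =>
      intro x hx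
      obtain ⟨t1, ht1S, ht1f, hxt1, ht1u⟩ := ihu x hx.1
      obtain ⟨t2, ht2S, ht2f, hxt2, ht2v⟩ := ihv x hx.2
      refine ⟨t1 ∪ t2, Set.union_subset ht1S ht2S, ht1f.union ht2f, ?_, ?_⟩
      · rw [Set.sInter_union]; exact ⟨hxt1, hxt2⟩
      · rw [Set.sInter_union]
        exact fun z hz => ⟨ht1u hz.1, ht2v hz.2⟩
  | sUnion s hs ih =>
      intro x hx
      obtain ⟨u, hu, hxu⟩ := hx
      obtain ⟨t, hts, htf, hxt, htu⟩ := ih u hu x hxu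
      exact ⟨t, hts, htf, hxt, htu.trans (Set.subset_sUnion_of_mem hu)⟩

/-- If a CAT(0) space is not a finite union of metrically
closed convex proper subsets, then any two nonempty `T_co`-open sets meet; in
particular, if `X` has more than one point, `T_co` is not Hausdorff. -/
theorem coconvex_not_hausdorff_of_not_finite_union_of_convex
    (X : Type*) [MetricSpace X] (hX : IsCAT0 X)
    (h : ¬ ∃ (n : ℕ) (C : Fin n → Set X),
        (∀ i, IsClosed (C i) ∧ GeodesicallyConvex (C i) ∧ C i ≠ Set.univ) ∧
        (⋃ i, C i) = Set.univ) :
    (∀ U V : Set X, @IsOpen X (coconvexTopology X) U →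
        @IsOpen X (coconvexTopology X) V →
        U.Nonempty → V.Nonempty → (U ∩ V).Nonempty) ∧
    ((∃ x y : X, x ≠ y) → ¬ @T2Space X (coconvexTopology X)) := by
  have main : ∀ U V : Set X, @IsOpen X (coconvexTopology X) U →
      @IsOpen X (coconvexTopology X) V →
      U.Nonempty → V.Nonempty → (U ∩ V).Nonempty := by
    intro U V hU hV ⟨x, hx⟩ ⟨y, hy⟩
    by_contra hUV
    rw [Set.not_nonempty_iff_eq_empty] at hUV
    obtain ⟨t1, ht1S, ht1f, hxt1, ht1U⟩ := exists_finite_inter_aux hU x hx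
    obtain ⟨t2, ht2S, ht2f, hyt2, ht2V⟩ := exists_finite_inter_aux hV y hy
    set D : Set (Set X) := compl '' (t1 ∪ t2) with hD
    have hDfin : D.Finite := ((ht1f.union ht2f).image compl)
    obtain ⟨n, f, hf⟩ := hDfin.fin_embedding
    apply h
    refine ⟨n, fun i => f i, ?_, ?_⟩
    · intro i
      have hfi : (f i : Set X) ∈ D := hf ▸ Set.mem_range_self i
      obtain ⟨s, hs, hsf⟩ := hfi
      have hsS : s ∈ {U : Set X | ∃ C : Set X, IsClosed C ∧ GeodesicallyConvex C ∧ U = Cᶜ} := by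
        rcases hs with hs | hs
        · exact ht1S hs
        · exact ht2S hs
      obtain ⟨C, hCc, hCg, rfl⟩ := hsS
      show IsClosed (f i : Set X) ∧ GeodesicallyConvex (f i : Set X) ∧ (f i : Set X) ≠ Set.univ
      rw [← hsf, compl_compl]
      refine ⟨hCc, hCg, ?_⟩
      intro hCuniv
      rcases hs with hs | hs
      · have : x ∈ Cᶜ := hxt1 Cᶜ hs
        exact this (hCuniv ▸ Set.mem_univ x)
      · have : y ∈ Cᶜ := hyt2 Cᶜ hs
        exact this (hCuniv ▸ Set.mem_univ y)
    · have hsub : ⋂₀ (t1 ∪ t2) ⊆ (∅ : Set X) := by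
        rw [Set.sInter_union, ← hUV]
        exact fun z hz => ⟨ht1U hz.1, ht2V hz.2⟩
      ext z
      simp only [Set.mem_iUnion, Set.mem_univ, iff_true]
      by_contra hz
      push_neg at hz
      have hzmem : z ∈ ⋂₀ (t1 ∪ t2) := by
        intro s hs
        by_contra hzs
        have hsD : sᶜ ∈ D := Set.mem_image_of_mem compl hs
        rw [← hf] at hsD
        obtain ⟨i, hi⟩ := hsD
        exact hz i (hi ▸ hzs)
      exact hsub hzmem
  refine ⟨main, ?_⟩
  rintro ⟨x, y, hxy⟩ h2
  obtain ⟨u, v, hu, hv, hxu, hyv, huv⟩ := @t2_separation X (coconvexTopology X) h2 x y hxy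
  obtain ⟨z, hz⟩ := main u v hu hv ⟨x, hxu⟩ ⟨y, hyv⟩
  exact Set.disjoint_iff.mp huv hz
end

section
/- Let H be a real Hilbert space, (x_n) a bounded sequence in H and x ∈ H. Then (x_n) converges weakly to x in the functional-analytic sense (⟨x_n − x, v⟩ → 0 for every v ∈ H) if and only if for every y ∈ H, the nearest-point projections of x_n onto the segment [x, y] converge to x in norm. -/
open Filter Topology Metric Set

/-!
The nearest point `p` of the segment `[x, y]` to `z` is characterised by the variational
inequality `⟪z - p, q - p⟫ ≤ 0` for `q ∈ [x, y]`. Testing it against `q = x` gives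
`‖p - x‖² ≤ |⟪z - x, y - x⟫|`, so weak convergence forces the projections to `x`. Testing it
against `q = y` gives `⟪z - x, y - x⟫ ≤ ‖p - x‖ ‖y - x‖` as long as `p ≠ y`, so if the projections
onto `[x, x + v]` and `[x, x - v]` tend to `x`, then `⟪u n - x, v⟫` and `⟪u n - x, -v⟫` are
eventually below every `ε > 0`.
-/

section NearestPoint

variable {E : Type*} [NormedAddCommGroup E] [InnerProductSpace ℝ E]

open scoped RealInnerProductSpace

theorem exists_isNearestPoint_segment (z x y : E) : ∃ p, IsNearestPoint z (segment ℝ x y) p := by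
  have hK : IsCompact (segment ℝ x y) := by
    rw [segment_eq_image']
    exact isCompact_Icc.image (by fun_prop)
  obtain ⟨p, hp, hmin⟩ := hK.exists_isMinOn ⟨x, left_mem_segment ℝ x y⟩
    (by fun_prop : Continuous (dist z)).continuousOn
  exact ⟨p, hp, fun q hq => hmin hq⟩

theorem IsNearestPoint.real_inner_le_zero {z p : E} {K : Set E} (hK : Convex ℝ K)
    (hp : IsNearestPoint z K p) {q : E} (hq : q ∈ K) : ⟪z - p, q - p⟫ ≤ 0 := by
  refine (norm_eq_iInf_iff_real_inner_le_zero hK hp.1).1 ?_ q hq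
  simp only [← dist_eq_norm]
  exact (IsMinOn.iInf_eq (f := dist z) hp.1 fun q hq => hp.2 q hq).symm

theorem IsNearestPoint.norm_sub_sq_le_abs_inner {z x y p : E}
    (hp : IsNearestPoint z (segment ℝ x y) p) : ‖p - x‖ ^ 2 ≤ |⟪z - x, y - x⟫| := by
  have hmem := hp.1
  rw [segment_eq_image'] at hmem
  obtain ⟨t, ⟨ht0, ht1⟩, rfl⟩ := hmem
  dsimp only at hp ⊢
  have hvar := hp.real_inner_le_zero (convex_segment x y) (left_mem_segment ℝ x y)
  have hz : z - (x + t • (y - x)) = (z - x) - t • (y - x) := by abel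
  rw [hz, sub_add_cancel_left, inner_neg_right, inner_sub_left, real_inner_self_eq_norm_sq,
    real_inner_smul_right] at hvar
  rw [add_sub_cancel_left]
  have habs : t * ⟪z - x, y - x⟫ ≤ |⟪z - x, y - x⟫| :=
    (mul_le_mul_of_nonneg_left (le_abs_self _) ht0).trans
      (mul_le_of_le_one_left (abs_nonneg _) ht1)
  nlinarith

theorem IsNearestPoint.inner_le_norm_mul_norm {z x y p : E}
    (hp : IsNearestPoint z (segment ℝ x y) p) (hpy : p ≠ y) :
    ⟪z - x, y - x⟫ ≤ ‖p - x‖ * ‖y - x‖ := by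
  have hmem := hp.1
  rw [segment_eq_image'] at hmem
  obtain ⟨t, ⟨ht0, ht1⟩, rfl⟩ := hmem
  dsimp only at hp ⊢
  have ht : t < 1 := ht1.lt_of_ne fun h => hpy (by simp [h])
  have hvar := hp.real_inner_le_zero (convex_segment x y) (right_mem_segment ℝ x y)
  have hy : y - (x + t • (y - x)) = (1 - t) • (y - x) := by
    rw [sub_smul, one_smul]; abel
  rw [hy, real_inner_smul_right] at hvar
  have hzp : ⟪z - (x + t • (y - x)), y - x⟫ ≤ 0 :=
    nonpos_of_mul_nonpos_right hvar (sub_pos.2 ht)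
  calc ⟪z - x, y - x⟫
      = ⟪z - (x + t • (y - x)), y - x⟫ + ⟪x + t • (y - x) - x, y - x⟫ := by
        rw [← inner_add_left, sub_add_sub_cancel]
    _ ≤ 0 + ‖x + t • (y - x) - x‖ * ‖y - x‖ := add_le_add hzp (real_inner_le_norm _ _)
    _ = _ := zero_add _

variable {ι : Type*} {l : Filter ι} {u p : ι → E} {x : E}

theorem tendsto_of_isNearestPoint_segment {y : E}
    (hinner : Tendsto (fun i => ⟪u i - x, y - x⟫) l (𝓝 0))
    (hp : ∀ i, IsNearestPoint (u i) (segment ℝ x y) (p i)) : Tendsto p l (𝓝 x) := by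
  have hsq : Tendsto (fun i => ‖p i - x‖ ^ 2) l (𝓝 0) := by
    refine squeeze_zero (fun i => by positivity) (fun i => (hp i).norm_sub_sq_le_abs_inner) ?_
    simpa using hinner.abs
  rw [tendsto_iff_norm_sub_tendsto_zero]
  simpa [Real.sqrt_sq (norm_nonneg _)] using hsq.sqrt

theorem eventually_inner_lt_of_tendsto_isNearestPoint {w : E}
    (h : ∀ p : ι → E, (∀ i, IsNearestPoint (u i) (segment ℝ x (x + w)) (p i)) →
      Tendsto p l (𝓝 x))
    {ε : ℝ} (hε : 0 < ε) : ∀ᶠ i in l, ⟪u i - x, w⟫ < ε := by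
  rcases eq_or_ne w 0 with rfl | hw
  · simp [hε]
  choose p hp using fun i => exists_isNearestPoint_segment (u i) x (x + w)
  have hlim := h p hp
  have hbound : Tendsto (fun i => ‖p i - x‖ * ‖w‖) l (𝓝 0) := by
    simpa using (tendsto_iff_norm_sub_tendsto_zero.1 hlim).mul_const ‖w‖
  filter_upwards [hlim.eventually_ne (by simpa using hw : x ≠ x + w),
    hbound.eventually_lt_const hε] with i hne hlt
  have hle := (hp i).inner_le_norm_mul_norm hne
  rw [add_sub_cancel_left] at hle
  exact hle.trans_lt hlt

end NearestPoint

theorem hilbert_weak_convergence_iff_projections_general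
    (H : Type*) [NormedAddCommGroup H] [InnerProductSpace ℝ H]
    (u : ℕ → H) (x : H) :
    (∀ v : H, Filter.Tendsto (fun n => (inner ℝ (u n - x) v : ℝ))
        Filter.atTop (𝓝 0))
      ↔
    (∀ y : H, ∀ p : ℕ → H,
        (∀ n, p n ∈ segment ℝ x y ∧
          ∀ q ∈ segment ℝ x y, dist (u n) (p n) ≤ dist (u n) q) →
        Filter.Tendsto p Filter.atTop (𝓝 x)) := by
  constructor
  · intro hweak y p hp
    exact tendsto_of_isNearestPoint_segment (hweak (y - x)) hp
  · intro hproj v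
    refine tendsto_order.2 ⟨fun a ha => ?_,
      fun a ha => eventually_inner_lt_of_tendsto_isNearestPoint (hproj _) ha⟩
    filter_upwards [eventually_inner_lt_of_tendsto_isNearestPoint (w := -v) (hproj _)
      (neg_pos.2 ha)] with n hn
    rw [inner_neg_right] at hn
    linarith

/-- In a real Hilbert space, a bounded sequence converges
weakly to `x` in the functional-analytic sense iff for every `y` the nearest
point projections of the sequence onto the segment `[x, y]` converge to `x`
in norm. -/
theorem hilbert_weak_convergence_iff_projections
    (H : Type*) [NormedAddCommGroup H] [InnerProductSpace ℝ H] [CompleteSpace H]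
    (u : ℕ → H) (hb : Bornology.IsBounded (Set.range u)) (x : H) :
    (∀ v : H, Filter.Tendsto (fun n => (inner ℝ (u n - x) v : ℝ))
        Filter.atTop (𝓝 0))
      ↔
    (∀ y : H, ∀ p : ℕ → H,
        (∀ n, p n ∈ segment ℝ x y ∧
          ∀ q ∈ segment ℝ x y, dist (u n) (p n) ≤ dist (u n) q) →
        Filter.Tendsto p Filter.atTop (𝓝 x)) :=
  hilbert_weak_convergence_iff_projections_general H u x
end
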